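/- arXiv:2410.20141 — 5 statements merged into one kernel-verified Lean document; each statement's English description precedes it below -/
import Mathlib

section
/- Let N ≥ 2 be an integer, F ∈ ℝ^N a nonconstant vector, and ρ > 0 a real number such that ρ·(F_i − F̄)² ≤ Var(F) for every i ∈ {1,…,N}. Then the vector p ∈ ℝ^N defined by p_i := 1/N + √ρ·(F_i − F̄)/(N·√(Var(F))) belongs to P_{ρ,N} and satisfies Σ_{i=1}^N p_i·F_i = F̄ + √(ρ·Var(F)). In particular, sup_{p ∈ P_{ρ,N}} Σ_{i=1}^N p_i·F_i ≥ F̄ + √(ρ·Var(F)). -/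
/-- The constraint set `P_{ρ,N}`: probability vectors on `{1,…,N}` whose KL divergence
from the uniform vector is at most `ρ` (convention `0 · log 0 = 0` is automatic since
`Real.log 0 = 0`). -/
def Pset (N : ℕ) (ρ : ℝ) : Set (Fin N → ℝ) :=
  {p | (∀ i, 0 ≤ p i) ∧ ∑ i, p i = 1 ∧ ∑ i, p i * Real.log (N * p i) ≤ ρ}

/-- `(1+y) log(1+y) ≤ y + y²` for `y ≥ -1`. -/
lemma key_log_ineq (y : ℝ) (hy : -1 ≤ y) : (1 + y) * Real.log (1 + y) ≤ y + y ^ 2 := by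
  rcases eq_or_lt_of_le hy with h | h
  · simp [← h]
  · have h0 : 0 < 1 + y := by linarith
    have hlog : Real.log (1 + y) ≤ (1 + y) - 1 := Real.log_le_sub_one_of_pos h0
    nlinarith [mul_le_mul_of_nonneg_left hlog h0.le]

/-- For a nonconstant loss vector `F` and `ρ > 0` with `ρ (F i - F̄)² ≤ Var(F)` for all `i`,
the tilted weight vector `p i = 1/N + √ρ (F i - F̄)/(N √(Var F))` lies in `P_{ρ,N}` and
achieves `∑ p i F i = F̄ + √(ρ Var F)`; hence `sup_{p ∈ P_{ρ,N}} ∑ p i F i ≥ F̄ + √(ρ Var F)`. -/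
theorem tilted_weights_mem_and_value (N : ℕ) (hN : 2 ≤ N) (F : Fin N → ℝ)
    (hnc : ∃ i j, F i ≠ F j) (ρ : ℝ) (hρ : 0 < ρ)
    (Fbar V : ℝ)
    (hFbar : Fbar = (N : ℝ)⁻¹ * ∑ i, F i)
    (hV : V = (N : ℝ)⁻¹ * ∑ i, (F i - Fbar) ^ 2)
    (hcond : ∀ i, ρ * (F i - Fbar) ^ 2 ≤ V)
    (p : Fin N → ℝ)
    (hp : p = fun i => 1 / N + Real.sqrt ρ * (F i - Fbar) / (N * Real.sqrt V)) :
    p ∈ Pset N ρ ∧ (∑ i, p i * F i) = Fbar + Real.sqrt (ρ * V) ∧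
      Fbar + Real.sqrt (ρ * V) ≤ sSup ((fun q : Fin N → ℝ => ∑ i, q i * F i) '' Pset N ρ) := by
  have hNpos : (0:ℝ) < N := by
    have : (2:ℝ) ≤ N := by exact_mod_cast hN
    linarith
  have hNne : (N:ℝ) ≠ 0 := ne_of_gt hNpos
  have hVnonneg : 0 ≤ V := by
    rw [hV]
    positivity
  have hsum0 : ∑ i, (F i - Fbar) = 0 := by
    rw [Finset.sum_sub_distrib, Finset.sum_const, Finset.card_univ, Fintype.card_fin, hFbar]
    field_simp
    rw [nsmul_eq_mul, mul_div_assoc', mul_div_cancel_left₀ _ hNne, sub_self]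
  have hsumSq : ∑ i, (F i - Fbar) ^ 2 = N * V := by
    rw [hV]
    field_simp
  have hVpos : 0 < V := by
    rcases hnc with ⟨i, j, hij⟩
    rcases lt_or_eq_of_le hVnonneg with h | h
    · exact h
    exfalso
    have hz : ∑ k, (F k - Fbar) ^ 2 = 0 := by rw [hsumSq, ← h, mul_zero]
    have hall := (Finset.sum_eq_zero_iff_of_nonneg (fun k _ => sq_nonneg (F k - Fbar))).mp hz
    have hi : F i = Fbar := by
      have := hall i (Finset.mem_univ i); nlinarith [this]
    have hj : F j = Fbar := by
      have := hall j (Finset.mem_univ j); nlinarith [this]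
    exact hij (hi.trans hj.symm)
  set s := Real.sqrt ρ with hs
  set t := Real.sqrt V with ht
  have htpos : 0 < t := Real.sqrt_pos.mpr hVpos
  have htne : t ≠ 0 := ne_of_gt htpos
  have hspos : 0 < s := Real.sqrt_pos.mpr hρ
  have ht2 : t ^ 2 = V := Real.sq_sqrt hVnonneg
  have hs2 : s ^ 2 = ρ := Real.sq_sqrt hρ.le
  set x : Fin N → ℝ := fun i => s * (F i - Fbar) / t with hx
  have hxabs : ∀ i, |x i| ≤ 1 := by
    intro i
    have h1 : (s * (F i - Fbar)) ^ 2 ≤ t ^ 2 := by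
      rw [mul_pow, hs2, ht2]; exact hcond i
    have h2 : |s * (F i - Fbar)| ≤ t := by
      have h3 := Real.sqrt_le_sqrt h1
      rwa [Real.sqrt_sq_eq_abs, Real.sqrt_sq htpos.le] at h3
    rw [hx]
    simp only [abs_div, abs_of_pos htpos]
    exact div_le_one_of_le₀ h2 htpos.le
  have hxge : ∀ i, -1 ≤ x i := fun i => neg_le_of_abs_le (hxabs i)
  have hpx : p = fun i => (1 + x i) / N := by
    rw [hp]; funext i; rw [hx]
    rw [add_div, div_div, mul_comm (N:ℝ) t]
  have hxsum : ∑ i, x i = 0 := by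
    rw [hx]
    have : ∀ i, s * (F i - Fbar) / t = (s / t) * (F i - Fbar) := fun i => by ring
    simp only [this, ← Finset.mul_sum, hsum0, mul_zero]
  have hxsq : ∑ i, (x i) ^ 2 = N * ρ := by
    rw [hx]
    have : ∀ i, (s * (F i - Fbar) / t) ^ 2 = (s ^ 2 / t ^ 2) * (F i - Fbar) ^ 2 := fun i => by ring
    simp only [this, ← Finset.mul_sum, hsumSq, hs2, ht2]
    field_simp
  -- membership
  have hnonneg : ∀ i, 0 ≤ p i := by
    intro i
    rw [hpx]
    exact div_nonneg (by linarith [hxge i]) hNpos.le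
  have hsum1 : ∑ i, p i = 1 := by
    rw [hpx]
    simp only [add_div]
    rw [Finset.sum_add_distrib, Finset.sum_const, Finset.card_univ, Fintype.card_fin,
      ← Finset.sum_div, hxsum]
    field_simp
    rw [nsmul_eq_mul, mul_one_div_cancel hNne, mul_one, add_zero]
  have hNp : ∀ i, (N : ℝ) * p i = 1 + x i := by
    intro i
    rw [hpx]
    field_simp
  have hKL : ∑ i, p i * Real.log (N * p i) ≤ ρ := by
    have hterm : ∀ i ∈ Finset.univ, p i * Real.log ((N:ℝ) * p i) ≤ (x i + (x i) ^ 2) / N := by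
      intro i _
      rw [hNp i]
      have hpi : p i = (1 + x i) / N := by rw [hpx]
      rw [hpi]
      rw [div_mul_eq_mul_div, div_le_div_iff₀ hNpos hNpos]
      have := key_log_ineq (x i) (hxge i)
      nlinarith [this]
    calc ∑ i, p i * Real.log ((N:ℝ) * p i) ≤ ∑ i, (x i + (x i) ^ 2) / N :=
          Finset.sum_le_sum hterm
      _ = ρ := by
          rw [← Finset.sum_div, Finset.sum_add_distrib, hxsum, hxsq]
          field_simp
          ring
  have hmem : p ∈ Pset N ρ := ⟨hnonneg, hsum1, hKL⟩
  -- value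
  have hFF : ∑ i, (F i - Fbar) * F i = N * V := by
    have : ∀ i, (F i - Fbar) * F i = (F i - Fbar) ^ 2 + Fbar * (F i - Fbar) := fun i => by ring
    simp only [this]
    rw [Finset.sum_add_distrib, hsumSq, ← Finset.mul_sum, hsum0, mul_zero, add_zero]
  have hvalue : (∑ i, p i * F i) = Fbar + Real.sqrt (ρ * V) := by
    have hsplit : ∀ i, p i * F i = F i / N + (s / (N * t)) * ((F i - Fbar) * F i) := by
      intro i
      rw [hp]
      field_simp
    rw [Finset.sum_congr rfl (fun i _ => hsplit i), Finset.sum_add_distrib, ← Finset.sum_div,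
      ← Finset.mul_sum, hFF]
    have h1 : (∑ i, F i) / N = Fbar := by rw [hFbar]; field_simp
    have h2 : s / (N * t) * (N * V) = Real.sqrt (ρ * V) := by
      rw [Real.sqrt_mul hρ.le, ← hs, ← ht]
      field_simp
      linear_combination (-1 : ℝ) * ht2
    rw [h1, h2]
  refine ⟨hmem, hvalue, ?_⟩
  have hbdd : BddAbove ((fun q : Fin N → ℝ => ∑ i, q i * F i) '' Pset N ρ) := by
    refine ⟨∑ i, |F i|, ?_⟩
    rintro y ⟨q, ⟨hq0, hq1, -⟩, rfl⟩
    calc ∑ i, q i * F i ≤ ∑ i, q i * (∑ j, |F j|) := by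
          refine Finset.sum_le_sum fun i _ => mul_le_mul_of_nonneg_left ?_ (hq0 i)
          calc F i ≤ |F i| := le_abs_self _
            _ ≤ ∑ j, |F j| := Finset.single_le_sum (fun j _ => abs_nonneg (F j))
                (Finset.mem_univ i)
      _ = ∑ j, |F j| := by rw [← Finset.sum_mul, hq1, one_mul]
  rw [← hvalue]
  exact le_csSup hbdd ⟨p, hmem, rfl⟩
end

section
/- Let N ≥ 1 be an integer, ρ ≥ 0 a real number, F ∈ ℝ^N, and p ∈ P_{ρ,N}. Then Σ_{i=1}^N p_i·F_i − F̄ ≤ √(2ρ)·max_{1 ≤ i ≤ N} |F_i − F̄|. -/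
open Real

/- derivative of h x = (x+1) log x - 2(x-1) -/
lemma hasDerivAt_hfun {x : ℝ} (hx : 0 < x) :
    HasDerivAt (fun y : ℝ => (y+1) * Real.log y - 2*(y-1))
      (Real.log x + (x+1) * x⁻¹ - 2) x := by
  have hlog := Real.hasDerivAt_log hx.ne'
  have h1 : HasDerivAt (fun y : ℝ => (y+1) * Real.log y)
      (1 * Real.log x + (x+1) * x⁻¹) x :=
    (((hasDerivAt_id x).add_const 1).mul hlog)
  have h2 : HasDerivAt (fun y : ℝ => 2*(y-1)) (2*1) x :=
    ((hasDerivAt_id x).sub_const 1).const_mul 2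
  exact (h1.sub h2).congr_deriv (by ring)

lemma hfun_mono : MonotoneOn (fun y : ℝ => (y+1) * Real.log y - 2*(y-1)) (Set.Ioi 0) := by
  have hint : interior (Set.Ioi (0:ℝ)) = Set.Ioi 0 := interior_Ioi
  apply monotoneOn_of_deriv_nonneg (convex_Ioi 0)
  · intro x hx
    exact ((hasDerivAt_hfun hx).continuousAt).continuousWithinAt
  · rw [hint]
    intro x hx
    exact (hasDerivAt_hfun hx).differentiableAt.differentiableWithinAt
  · rw [hint]
    intro x hx
    rw [(hasDerivAt_hfun hx).deriv]
    have := Real.one_sub_inv_le_log_of_pos hx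
    have hx' : x ≠ 0 := ne_of_gt hx
    have : 1 - x⁻¹ ≤ Real.log x := this
    have hxx : (x+1) * x⁻¹ = 1 + x⁻¹ := by field_simp
    rw [hxx]; linarith

lemma hasDerivAt_gfun {x : ℝ} (hx : 0 < x) :
    HasDerivAt (fun y : ℝ => 2*(y+2)*(y*Real.log y - y + 1) - 3*(y-1)^2)
      (4*((x+1)*Real.log x - 2*(x-1))) x := by
  have hlog := Real.hasDerivAt_log hx.ne'
  have h1 : HasDerivAt (fun y : ℝ => y * Real.log y) (Real.log x + 1) x := by
    have := (hasDerivAt_id x).mul hlog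
    exact this.congr_deriv (by simp [mul_inv_cancel₀ hx.ne'])
  have h2 : HasDerivAt (fun y : ℝ => y*Real.log y - y + 1) (Real.log x + 1 - 1) x :=
    (h1.sub (hasDerivAt_id x)).add_const 1
  have h3 : HasDerivAt (fun y : ℝ => 2*(y+2)) (2*1) x :=
    ((hasDerivAt_id x).add_const 2).const_mul 2
  have h4 : HasDerivAt (fun y : ℝ => 2*(y+2)*(y*Real.log y - y + 1))
      (2*1*(x*Real.log x - x + 1) + 2*(x+2)*(Real.log x + 1 - 1)) x := h3.mul h2
  have h5 : HasDerivAt (fun y : ℝ => 3*(y-1)^2) (3*(2*(x-1)^1*1)) x :=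
    (((hasDerivAt_id x).sub_const 1).pow 2).const_mul 3
  have := h4.sub h5
  exact this.congr_deriv (by ring)

/-- Pointwise Pinsker-type inequality. -/
lemma key_pointwise {x : ℝ} (hx : 0 ≤ x) :
    3*(x-1)^2 ≤ 2*(x+2)*(x*Real.log x - x + 1) := by
  rcases eq_or_lt_of_le hx with h0 | h0
  · rw [← h0]; norm_num
  set g : ℝ → ℝ := fun y => 2*(y+2)*(y*Real.log y - y + 1) - 3*(y-1)^2 with hg
  have hg1 : g 1 = 0 := by simp [hg]
  have hgx : 0 ≤ g x := by
    rcases le_or_gt 1 x with hx1 | hx1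
    · -- monotone on Ici 1
      have mono : MonotoneOn g (Set.Ici (1:ℝ)) := by
        apply monotoneOn_of_deriv_nonneg (convex_Ici 1)
        · intro y hy
          have hy0 : (0:ℝ) < y := lt_of_lt_of_le one_pos hy
          exact ((hasDerivAt_gfun hy0).continuousAt).continuousWithinAt
        · rw [interior_Ici]
          intro y hy
          have hy0 : (0:ℝ) < y := lt_trans one_pos hy
          exact (hasDerivAt_gfun hy0).differentiableAt.differentiableWithinAt
        · rw [interior_Ici]
          intro y hy
          have hy0 : (0:ℝ) < y := lt_trans one_pos hy
          rw [(hasDerivAt_gfun hy0).deriv]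
          have := hfun_mono (Set.mem_Ioi.mpr one_pos) (Set.mem_Ioi.mpr hy0) (le_of_lt hy)
          simp only [Real.log_one] at this
          nlinarith
      have := mono (Set.mem_Ici.mpr le_rfl) (Set.mem_Ici.mpr hx1) hx1
      rw [hg1] at this; exact this
    · -- antitone on Ioc 0 1
      have anti : AntitoneOn g (Set.Ioc (0:ℝ) 1) := by
        apply antitoneOn_of_deriv_nonpos (convex_Ioc 0 1)
        · intro y hy
          exact ((hasDerivAt_gfun hy.1).continuousAt).continuousWithinAt
        · rw [interior_Ioc]
          intro y hy
          exact (hasDerivAt_gfun hy.1).differentiableAt.differentiableWithinAt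
        · rw [interior_Ioc]
          intro y hy
          rw [(hasDerivAt_gfun hy.1).deriv]
          have := hfun_mono (Set.mem_Ioi.mpr hy.1) (Set.mem_Ioi.mpr one_pos) (le_of_lt hy.2)
          simp only [Real.log_one] at this
          nlinarith
      have := anti (Set.mem_Ioc.mpr ⟨h0, le_of_lt hx1⟩) (Set.mem_Ioc.mpr ⟨one_pos, le_rfl⟩)
        (le_of_lt hx1)
      rw [hg1] at this; exact this
  simp only [hg, sub_nonneg] at hgx
  linarith

/-- Discrete Pinsker inequality versus the uniform distribution. -/
lemma pinsker_unif (N : ℕ) (hN : 1 ≤ N) (ρ : ℝ) (hρ : 0 ≤ ρ)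
    (p : Fin N → ℝ) (hpos : ∀ i, 0 ≤ p i) (hsum : ∑ i, p i = 1)
    (hKL : ∑ i, p i * Real.log (N * p i) ≤ ρ) :
    ∑ i, |p i - (N:ℝ)⁻¹| ≤ Real.sqrt (2 * ρ) := by
  have hNpos : (0:ℝ) < N := by exact_mod_cast Nat.lt_of_lt_of_le Nat.zero_lt_one hN
  set q : ℝ := (N:ℝ)⁻¹ with hq
  have hqpos : 0 < q := inv_pos.mpr hNpos
  set a : Fin N → ℝ := fun i => 3*q*((N:ℝ)*p i - 1)^2 / ((N:ℝ)*p i + 2) with ha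
  set b : Fin N → ℝ := fun i => q*((N:ℝ)*p i + 2)/3 with hb
  have hr : ∀ i, 0 ≤ (N:ℝ)*p i := fun i => mul_nonneg hNpos.le (hpos i)
  have hrp : ∀ i, (0:ℝ) < (N:ℝ)*p i + 2 := fun i => by have := hr i; linarith
  have hanon : ∀ i, 0 ≤ a i := fun i =>
    div_nonneg (by positivity) (hrp i).le
  have hbnon : ∀ i, 0 ≤ b i := fun i =>
    div_nonneg (mul_nonneg hqpos.le (hrp i).le) (by norm_num)
  have habs : ∀ i, |p i - q| = Real.sqrt (a i) * Real.sqrt (b i) := by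
    intro i
    rw [← Real.sqrt_mul (hanon i)]
    have hab : a i * b i = (q * ((N:ℝ)*p i - 1))^2 := by
      simp only [ha, hb]
      rw [div_mul_div_comm, div_eq_iff (mul_pos (hrp i) (by norm_num)).ne']
      ring
    rw [hab, Real.sqrt_sq_eq_abs, abs_mul, abs_of_pos hqpos]
    have : q * ((N:ℝ)*p i - 1) = p i - q := by
      rw [mul_sub, ← mul_assoc, show q * (N:ℝ) = 1 from inv_mul_cancel₀ hNpos.ne']
      ring
    rw [← this, abs_mul, abs_of_pos hqpos]
  have hCS : ∑ i, |p i - q| ≤ Real.sqrt (∑ i, a i) * Real.sqrt (∑ i, b i) := by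
    calc ∑ i, |p i - q| = ∑ i, Real.sqrt (a i) * Real.sqrt (b i) := by
          exact Finset.sum_congr rfl fun i _ => habs i
      _ ≤ _ := Real.sum_sqrt_mul_sqrt_le _ hanon hbnon
  have hqN : q * (N:ℝ) = 1 := inv_mul_cancel₀ hNpos.ne'
  have hsb : ∑ i, b i = 1 := by
    have h1 : ∑ i, b i = (q/3) * ∑ i, ((N:ℝ)*p i + 2) := by
      rw [Finset.mul_sum]
      exact Finset.sum_congr rfl fun i _ => by simp only [hb]; ring
    rw [h1, Finset.sum_add_distrib, ← Finset.mul_sum, hsum, Finset.sum_const,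
      Finset.card_univ, Fintype.card_fin]
    simp only [nsmul_eq_mul, mul_one]
    nlinarith [hqN]
  have hsa : ∑ i, a i ≤ 2*ρ := by
    have hterm : ∀ i, a i ≤ 2*q*((N:ℝ)*p i * Real.log ((N:ℝ)*p i) - (N:ℝ)*p i + 1) := by
      intro i
      rw [ha, div_le_iff₀ (hrp i)]
      have := key_pointwise (hr i)
      nlinarith [hqpos.le, mul_le_mul_of_nonneg_left this hqpos.le]
    calc ∑ i, a i ≤ ∑ i, 2*q*((N:ℝ)*p i * Real.log ((N:ℝ)*p i) - (N:ℝ)*p i + 1) :=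
          Finset.sum_le_sum fun i _ => hterm i
      _ = 2 * (∑ i, p i * Real.log ((N:ℝ)*p i)) - 2 * (∑ i, p i) + (N:ℝ) * (2*q) := by
          rw [Finset.mul_sum, Finset.mul_sum, ← Finset.sum_sub_distrib]
          have hc : ∑ _i : Fin N, 2*q = (N:ℝ) * (2*q) := by
            rw [Finset.sum_const, Finset.card_univ, Fintype.card_fin, nsmul_eq_mul]
          rw [← hc, ← Finset.sum_add_distrib]
          refine Finset.sum_congr rfl fun i _ => ?_
          have : 2*q*((N:ℝ)*p i * Real.log ((N:ℝ)*p i) - (N:ℝ)*p i + 1)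
              = 2*(q*(N:ℝ))*(p i * Real.log ((N:ℝ)*p i)) - 2*(q*(N:ℝ))*p i + 2*q := by ring
          rw [this, hqN]; ring
      _ = 2 * ∑ i, p i * Real.log ((N:ℝ)*p i) := by
          rw [hsum]; nlinarith [hqN]
      _ ≤ 2*ρ := by linarith
  calc ∑ i, |p i - q| ≤ Real.sqrt (∑ i, a i) * Real.sqrt (∑ i, b i) := hCS
    _ = Real.sqrt (∑ i, a i) := by rw [hsb, Real.sqrt_one, mul_one]
    _ ≤ Real.sqrt (2*ρ) := Real.sqrt_le_sqrt hsa

/-- For any `p ∈ P_{ρ,N}` and any `F ∈ ℝ^N`,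
`∑ p i F i - F̄ ≤ √(2ρ) · max_i |F i - F̄|` where `F̄ = (1/N) ∑ F i`. -/
theorem weighted_sum_sub_mean_le (N : ℕ) (hN : 1 ≤ N) (ρ : ℝ) (hρ : 0 ≤ ρ)
    (F : Fin N → ℝ) (p : Fin N → ℝ) (hp : p ∈ Pset N ρ)
    (Fbar : ℝ) (hFbar : Fbar = (N : ℝ)⁻¹ * ∑ i, F i) :
    ∑ i, p i * F i - Fbar ≤
      Real.sqrt (2 * ρ) *
        Finset.univ.sup' ⟨⟨0, hN⟩, Finset.mem_univ _⟩ (fun i => |F i - Fbar|) := by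
  obtain ⟨hpos, hsum, hKL⟩ := hp
  have hNpos : (0:ℝ) < N := by exact_mod_cast Nat.lt_of_lt_of_le Nat.zero_lt_one hN
  set q : ℝ := (N:ℝ)⁻¹ with hq
  set M : ℝ := Finset.univ.sup' ⟨⟨0, hN⟩, Finset.mem_univ _⟩ (fun i => |F i - Fbar|) with hM
  have hMle : ∀ i, |F i - Fbar| ≤ M := fun i =>
    Finset.le_sup' (fun j => |F j - Fbar|) (Finset.mem_univ i)
  have hMnn : 0 ≤ M := le_trans (abs_nonneg _) (hMle ⟨0, hN⟩)
  have hqN : q * (N:ℝ) = 1 := inv_mul_cancel₀ hNpos.ne'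
  have expand : ∑ i, p i * F i - Fbar = ∑ i, (p i - q) * (F i - Fbar) := by
    have hcalc : ∑ i, (p i - q) * (F i - Fbar)
        = (∑ i, p i * F i) - Fbar * (∑ i, p i) - q * (∑ i, F i) + (N:ℝ) * (q * Fbar) := by
      calc ∑ i, (p i - q) * (F i - Fbar)
          = ∑ i, (p i * F i - Fbar * p i - q * F i + q * Fbar) :=
            Finset.sum_congr rfl fun i _ => by ring
        _ = _ := by
            rw [Finset.sum_add_distrib, Finset.sum_sub_distrib, Finset.sum_sub_distrib,
              ← Finset.mul_sum, ← Finset.mul_sum, Finset.sum_const, Finset.card_univ,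
              Fintype.card_fin, nsmul_eq_mul]
    have h2 : (N:ℝ) * (q * Fbar) = Fbar := by
      rw [← mul_assoc, mul_comm (N:ℝ) q, hqN, one_mul]
    rw [hcalc, hsum, h2, hFbar]
    ring
  rw [expand]
  have step : ∑ i, (p i - q) * (F i - Fbar) ≤ (∑ i, |p i - q|) * M := by
    rw [Finset.sum_mul]
    refine Finset.sum_le_sum fun i _ => ?_
    calc (p i - q) * (F i - Fbar) ≤ |(p i - q) * (F i - Fbar)| := le_abs_self _
      _ = |p i - q| * |F i - Fbar| := abs_mul _ _
      _ ≤ |p i - q| * M := by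
          exact mul_le_mul_of_nonneg_left (hMle i) (abs_nonneg _)
  refine step.trans ?_
  exact mul_le_mul_of_nonneg_right (pinsker_unif N hN ρ hρ p hpos hsum hKL) hMnn
end

section
/- Let N ≥ 1 be an integer, ρ ≥ 0 a real number, F ∈ ℝ^N, and λ > 0. Then for every p ∈ P_{ρ,N}, Σ_{i=1}^N p_i·F_i ≤ λ·ρ + λ·log( (1/N)·Σ_{i=1}^N exp(F_i/λ) ). Consequently, sup_{p ∈ P_{ρ,N}} Σ_{i=1}^N p_i·F_i ≤ inf_{λ > 0} [ λ·ρ + λ·log( (1/N)·Σ_{i=1}^N exp(F_i/λ) ) ]. -/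
/-! The bound is the Gibbs (Donsker–Varadhan) variational inequality
`∑ pᵢ fᵢ ≤ ∑ pᵢ log pᵢ + log ∑ exp fᵢ` for a probability vector `p`, obtained by summing the
Fenchel–Young inequality `a c ≤ a log a - a + exp c` at `cᵢ = fᵢ - log ∑ⱼ exp fⱼ`. Applied to
`f = F / λ`, the entropy term is `KL(p ‖ uniform) - log N ≤ ρ - log N`. Since the uniform vector
lies in `P_{ρ,N}`, the supremum is over a nonempty set and the pointwise bound passes to
`sup ≤ inf`. -/

open Real Finset

lemma mul_le_mul_log_sub_add_exp {a : ℝ} (ha : 0 ≤ a) (c : ℝ) :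
    a * c ≤ a * log a - a + exp c := by
  rcases ha.eq_or_lt with rfl | ha
  · simpa using (exp_pos c).le
  · have h := add_one_le_exp (c - log a)
    rw [exp_sub, exp_log ha, le_div_iff₀ ha] at h
    nlinarith

theorem sum_mul_le_sum_mul_log_add_log_sum_exp {ι : Type*} [Fintype ι] {p : ι → ℝ}
    (hp : ∀ i, 0 ≤ p i) (hsum : ∑ i, p i = 1) (f : ι → ℝ) :
    ∑ i, p i * f i ≤ ∑ i, p i * log (p i) + log (∑ i, exp (f i)) := by
  have : Nonempty ι := by
    by_contra h
    rw [not_nonempty_iff] at h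
    simp at hsum
  set Z := ∑ i, exp (f i)
  have hZ : 0 < Z := sum_pos (fun i _ => exp_pos _) univ_nonempty
  have hnormalized : ∑ i, exp (f i - log Z) = 1 := by
    simp only [exp_sub, exp_log hZ, ← sum_div]
    exact div_self hZ.ne'
  have hshift : ∑ i, p i * (f i - log Z) = ∑ i, p i * f i - log Z := by
    simp only [mul_sub, sum_sub_distrib, ← sum_mul, hsum, one_mul]
  have hfenchel :=
    sum_le_sum fun i (_ : i ∈ univ) => mul_le_mul_log_sub_add_exp (hp i) (f i - log Z)
  rw [sum_add_distrib, sum_sub_distrib, hsum, hnormalized, hshift] at hfenchel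
  linarith

lemma sum_mul_log_const_mul {ι : Type*} [Fintype ι] {p : ι → ℝ} (hsum : ∑ i, p i = 1)
    {c : ℝ} (hc : c ≠ 0) : ∑ i, p i * log (c * p i) = log c + ∑ i, p i * log (p i) := by
  have h : ∀ i, p i * log (c * p i) = p i * log c + p i * log (p i) := fun i => by
    rcases eq_or_ne (p i) 0 with h | h
    · simp [h]
    · rw [log_mul hc h, mul_add]
  simp only [h, sum_add_distrib, ← sum_mul, hsum, one_mul]

lemma uniform_mem_Pset {N : ℕ} (hN : N ≠ 0) {ρ : ℝ} (hρ : 0 ≤ ρ) :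
    (fun _ => (N : ℝ)⁻¹) ∈ Pset N ρ := by
  have hN' : (N : ℝ) ≠ 0 := Nat.cast_ne_zero.mpr hN
  refine ⟨fun _ => by positivity, ?_, ?_⟩
  · simp [hN']
  · simpa [mul_inv_cancel₀ hN'] using hρ

theorem sum_mul_le_of_mem_Pset {N : ℕ} {ρ : ℝ} {p : Fin N → ℝ} (hp : p ∈ Pset N ρ)
    {l : ℝ} (hl : 0 < l) (F : Fin N → ℝ) :
    ∑ i, p i * F i ≤ l * ρ + l * log ((N : ℝ)⁻¹ * ∑ i, exp (F i / l)) := by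
  obtain ⟨hp, hsum, hKL⟩ := hp
  have hN : 0 < N := Nat.pos_of_ne_zero (by rintro rfl; simp at hsum)
  have : Nonempty (Fin N) := ⟨⟨0, hN⟩⟩
  have hZ : 0 < ∑ i, exp (F i / l) := sum_pos (fun i _ => exp_pos _) univ_nonempty
  have hgibbs := sum_mul_le_sum_mul_log_add_log_sum_exp hp hsum (fun i => F i / l)
  rw [sum_mul_log_const_mul hsum (by positivity)] at hKL
  rw [log_mul (by positivity) hZ.ne', log_inv]
  have hscale : ∑ i, p i * (F i / l) = (∑ i, p i * F i) / l := by
    simp only [mul_div_assoc', sum_div]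
  rw [hscale, div_le_iff₀ hl, mul_comm] at hgibbs
  calc ∑ i, p i * F i ≤ l * (∑ i, p i * log (p i) + log (∑ i, exp (F i / l))) := hgibbs
    _ ≤ l * (ρ - log N + log (∑ i, exp (F i / l))) := by gcongr; linarith
    _ = l * ρ + l * (-log N + log (∑ i, exp (F i / l))) := by ring

/-- Donsker–Varadhan-type bound: for every `p ∈ P_{ρ,N}` and every `λ > 0`,
`∑ p i F i ≤ λ ρ + λ log ((1/N) ∑ exp (F i / λ))`; consequently the supremum of the
linear objective over `P_{ρ,N}` is at most the infimum over `λ > 0` of the right-hand side. -/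
theorem weighted_sum_le_logSumExp (N : ℕ) (hN : 1 ≤ N) (ρ : ℝ) (hρ : 0 ≤ ρ)
    (F : Fin N → ℝ) :
    (∀ p ∈ Pset N ρ, ∀ l : ℝ, 0 < l →
        ∑ i, p i * F i ≤ l * ρ + l * Real.log ((N : ℝ)⁻¹ * ∑ i, Real.exp (F i / l))) ∧
      sSup ((fun p : Fin N → ℝ => ∑ i, p i * F i) '' Pset N ρ) ≤
        ⨅ l : {l : ℝ // 0 < l},
          (l : ℝ) * ρ + (l : ℝ) * Real.log ((N : ℝ)⁻¹ * ∑ i, Real.exp (F i / l)) := by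
  refine ⟨fun p hp l hl => sum_mul_le_of_mem_Pset hp hl F, ?_⟩
  have : Nonempty {l : ℝ // 0 < l} := ⟨⟨1, one_pos⟩⟩
  refine le_ciInf fun l => csSup_le ⟨_, Set.mem_image_of_mem _ (uniform_mem_Pset ?_ hρ)⟩ ?_
  · omega
  · rintro _ ⟨p, hp, rfl⟩
    exact sum_mul_le_of_mem_Pset hp l.2 F
end

section
/- Let N ≥ 1 be an integer and q ∈ ℝ^N with q_i > 0 for all i. For λ ≥ 0 define p(λ)_i := q_i^{1/(1+λ)} / Σ_{j=1}^N q_j^{1/(1+λ)} and K(λ) := Σ_{i=1}^N p(λ)_i·log(N·p(λ)_i). Then K is nonincreasing on [0,∞): for all 0 ≤ λ₁ ≤ λ₂, K(λ₂) ≤ K(λ₁). -/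
/-- The exponentially reweighted vector `p(λ) i = (q i)^(1/(1+λ)) / ∑ j, (q j)^(1/(1+λ))`. -/
noncomputable def tilt (N : ℕ) (q : Fin N → ℝ) (lam : ℝ) : Fin N → ℝ :=
  fun i => q i ^ ((1 : ℝ) / (1 + lam)) / ∑ j, q j ^ ((1 : ℝ) / (1 + lam))

/-- The KL divergence of `p(λ)` from the uniform vector,
`K(λ) = ∑ i, p(λ) i * log (N * p(λ) i)`. -/
noncomputable def tiltKL (N : ℕ) (q : Fin N → ℝ) (lam : ℝ) : ℝ :=
  ∑ i, tilt N q lam i * Real.log (N * tilt N q lam i)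

lemma gibbs {N : ℕ} (p r : Fin N → ℝ) (hp : ∀ i, 0 < p i) (hr : ∀ i, 0 < r i)
    (h : ∑ i, r i ≤ ∑ i, p i) : ∑ i, p i * Real.log (r i / p i) ≤ 0 := by
  have h1 : ∑ i, p i * Real.log (r i / p i) ≤ ∑ i, p i * (r i / p i - 1) :=
    Finset.sum_le_sum fun i _ => mul_le_mul_of_nonneg_left
      (Real.log_le_sub_one_of_pos (div_pos (hr i) (hp i))) (hp i).le
  have h2 : ∑ i, p i * (r i / p i - 1) = ∑ i, r i - ∑ i, p i := by
    rw [← Finset.sum_sub_distrib]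
    refine Finset.sum_congr rfl fun i _ => ?_
    rw [mul_sub, mul_one, mul_div_cancel₀ _ (hp i).ne']
  linarith

lemma entropy_pow_le {N : ℕ} (w : Fin N → ℝ) (hw : ∀ i, 0 < w i)
    (hsum : ∑ i, w i = 1) (s : ℝ) (hs0 : 0 ≤ s) (hs1 : s < 1) :
    ∑ i, (w i ^ s / ∑ j, w j ^ s) * Real.log (w i ^ s / ∑ j, w j ^ s)
      ≤ ∑ i, w i * Real.log (w i) := by
  haveI : Nonempty (Fin N) := by
    by_contra hne
    rw [not_nonempty_iff] at hne
    rw [Finset.univ_eq_empty, Finset.sum_empty] at hsum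
    norm_num at hsum
  set Z : ℝ := ∑ j, w j ^ s with hZ
  have hZpos : 0 < Z := Finset.sum_pos (fun j _ => Real.rpow_pos_of_pos (hw j) s) Finset.univ_nonempty
  set v : Fin N → ℝ := fun i => w i ^ s / Z with hv
  have hvpos : ∀ i, 0 < v i := fun i => div_pos (Real.rpow_pos_of_pos (hw i) s) hZpos
  have hvsum : ∑ i, v i = 1 := by
    rw [hv]
    simp only []
    rw [← Finset.sum_div, ← hZ, div_self hZpos.ne']
  have hlogv : ∀ i, Real.log (v i) = s * Real.log (w i) - Real.log Z := by
    intro i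
    rw [hv]
    simp only []
    rw [Real.log_div (Real.rpow_pos_of_pos (hw i) s).ne' hZpos.ne', Real.log_rpow (hw i)]
  set A : ℝ := ∑ i, v i * Real.log (w i) with hA
  set B : ℝ := ∑ i, w i * Real.log (w i) with hB
  -- KL(w‖v) ≥ 0
  have fact1 : s * B - Real.log Z - B ≤ 0 := by
    have g := gibbs w v hw hvpos (by rw [hvsum, hsum])
    have : ∑ i, w i * Real.log (v i / w i) = s * B - Real.log Z - B := by
      rw [hB]
      calc ∑ i, w i * Real.log (v i / w i)
          = ∑ i, (s * (w i * Real.log (w i)) - w i * Real.log Z - w i * Real.log (w i)) := by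
            refine Finset.sum_congr rfl fun i _ => ?_
            rw [Real.log_div (hvpos i).ne' (hw i).ne', hlogv i]; ring
        _ = s * (∑ i, w i * Real.log (w i)) - Real.log Z - ∑ i, w i * Real.log (w i) := by
            rw [Finset.sum_sub_distrib, Finset.sum_sub_distrib, ← Finset.mul_sum,
              ← Finset.sum_mul, hsum, one_mul]
    linarith [g, this ▸ g]
  -- KL(v‖w) ≥ 0
  have fact2 : A - s * A + Real.log Z ≤ 0 := by
    have g := gibbs v w hvpos hw (by rw [hvsum, hsum])
    have : ∑ i, v i * Real.log (w i / v i) = A - s * A + Real.log Z := by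
      calc ∑ i, v i * Real.log (w i / v i)
          = ∑ i, (v i * Real.log (w i) - s * (v i * Real.log (w i)) + v i * Real.log Z) := by
            refine Finset.sum_congr rfl fun i _ => ?_
            rw [Real.log_div (hw i).ne' (hvpos i).ne', hlogv i]; ring
        _ = A - s * A + Real.log Z := by
            rw [Finset.sum_add_distrib, Finset.sum_sub_distrib, ← Finset.mul_sum,
              ← Finset.sum_mul, hvsum, one_mul, hA]
    linarith [this ▸ g]
  have hgoal : ∑ i, v i * Real.log (v i) = s * A - Real.log Z := by
    calc ∑ i, v i * Real.log (v i)
        = ∑ i, (s * (v i * Real.log (w i)) - v i * Real.log Z) := by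
          refine Finset.sum_congr rfl fun i _ => ?_
          rw [hlogv i]; ring
      _ = s * A - Real.log Z := by
          rw [Finset.sum_sub_distrib, ← Finset.mul_sum, ← Finset.sum_mul, hvsum, one_mul, hA]
  show ∑ i, v i * Real.log (v i) ≤ B
  rw [hgoal]
  have hAB : A ≤ B := by nlinarith
  have hsAB : s * A ≤ s * B := mul_le_mul_of_nonneg_left hAB hs0
  linarith
lemma tilt_pos {N : ℕ} (hN : 1 ≤ N) (q : Fin N → ℝ) (hq : ∀ i, 0 < q i) (lam : ℝ) (i : Fin N) :
    0 < tilt N q lam i := by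
  haveI : Nonempty (Fin N) := Fin.pos_iff_nonempty.mp hN
  exact div_pos (Real.rpow_pos_of_pos (hq i) _)
    (Finset.sum_pos (fun j _ => Real.rpow_pos_of_pos (hq j) _) Finset.univ_nonempty)

lemma tilt_sum {N : ℕ} (hN : 1 ≤ N) (q : Fin N → ℝ) (hq : ∀ i, 0 < q i) (lam : ℝ) :
    ∑ i, tilt N q lam i = 1 := by
  haveI : Nonempty (Fin N) := Fin.pos_iff_nonempty.mp hN
  have hS : 0 < ∑ j, q j ^ ((1 : ℝ) / (1 + lam)) :=
    Finset.sum_pos (fun j _ => Real.rpow_pos_of_pos (hq j) _) Finset.univ_nonempty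
  unfold tilt
  rw [← Finset.sum_div, div_self hS.ne']

lemma tiltKL_expand {N : ℕ} (hN : 1 ≤ N) (q : Fin N → ℝ) (hq : ∀ i, 0 < q i) (lam : ℝ) :
    tiltKL N q lam = Real.log N + ∑ i, tilt N q lam i * Real.log (tilt N q lam i) := by
  have hN0 : (N : ℝ) ≠ 0 := Nat.cast_ne_zero.mpr (by omega)
  rw [tiltKL]
  calc ∑ i, tilt N q lam i * Real.log (N * tilt N q lam i)
      = ∑ i, (tilt N q lam i * Real.log N + tilt N q lam i * Real.log (tilt N q lam i)) := by
        refine Finset.sum_congr rfl fun i _ => ?_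
        rw [Real.log_mul hN0 (tilt_pos hN q hq lam i).ne']; ring
    _ = Real.log N + ∑ i, tilt N q lam i * Real.log (tilt N q lam i) := by
        rw [Finset.sum_add_distrib, ← Finset.sum_mul, tilt_sum hN q hq lam, one_mul]


/-- **Monotonicity of the FedMABA binary-search kernel.** For `q i > 0`, the map
`λ ↦ KL(p(λ)‖u)` is nonincreasing on `[0,∞)`. -/
theorem tiltKL_antitone (N : ℕ) (hN : 1 ≤ N) (q : Fin N → ℝ) (hq : ∀ i, 0 < q i)
    (lam₁ lam₂ : ℝ) (h₁ : 0 ≤ lam₁) (h₁₂ : lam₁ ≤ lam₂) :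
    tiltKL N q lam₂ ≤ tiltKL N q lam₁ := by
  rcases eq_or_lt_of_le h₁₂ with rfl | hlt
  · exact le_refl _
  haveI : Nonempty (Fin N) := Fin.pos_iff_nonempty.mp hN
  have h1pos : (0:ℝ) < 1 + lam₁ := by linarith
  have h2pos : (0:ℝ) < 1 + lam₂ := by linarith
  set s : ℝ := (1 + lam₁) / (1 + lam₂) with hs
  have hs0 : 0 ≤ s := le_of_lt (div_pos h1pos h2pos)
  have hs1 : s < 1 := (div_lt_one h2pos).mpr (by linarith)
  set w : Fin N → ℝ := tilt N q lam₁ with hw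
  have hwpos : ∀ i, 0 < w i := tilt_pos hN q hq lam₁
  have hwsum : ∑ i, w i = 1 := tilt_sum hN q hq lam₁
  have hS₁ : 0 < ∑ j, q j ^ ((1 : ℝ) / (1 + lam₁)) :=
    Finset.sum_pos (fun j _ => Real.rpow_pos_of_pos (hq j) _) Finset.univ_nonempty
  have hS₂ : 0 < ∑ j, q j ^ ((1 : ℝ) / (1 + lam₂)) :=
    Finset.sum_pos (fun j _ => Real.rpow_pos_of_pos (hq j) _) Finset.univ_nonempty
  have hts : (1 : ℝ) / (1 + lam₁) * s = (1 : ℝ) / (1 + lam₂) := by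
    rw [hs]; field_simp
  have hws : ∀ i, w i ^ s
      = q i ^ ((1 : ℝ) / (1 + lam₂)) / (∑ j, q j ^ ((1 : ℝ) / (1 + lam₁))) ^ s := by
    intro i
    rw [hw, tilt, Real.div_rpow (Real.rpow_pos_of_pos (hq i) _).le hS₁.le,
      ← Real.rpow_mul (hq i).le, hts]
  have hSs : (0:ℝ) < (∑ j, q j ^ ((1 : ℝ) / (1 + lam₁))) ^ s := Real.rpow_pos_of_pos hS₁ s
  have hZs : ∑ j, w j ^ s
      = (∑ j, q j ^ ((1 : ℝ) / (1 + lam₂))) / (∑ j, q j ^ ((1 : ℝ) / (1 + lam₁))) ^ s := by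
    rw [Finset.sum_congr rfl fun j _ => hws j, ← Finset.sum_div]
  have hkey : ∀ i, tilt N q lam₂ i = w i ^ s / ∑ j, w j ^ s := by
    intro i
    rw [hws i, hZs, tilt, div_div_div_cancel_right₀]
    exact hSs.ne'
  rw [tiltKL_expand hN q hq lam₁, tiltKL_expand hN q hq lam₂]
  have hmain := entropy_pow_le w hwpos hwsum s hs0 hs1
  have hrw : ∑ i, tilt N q lam₂ i * Real.log (tilt N q lam₂ i)
      = ∑ i, (w i ^ s / ∑ j, w j ^ s) * Real.log (w i ^ s / ∑ j, w j ^ s) := by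
    refine Finset.sum_congr rfl fun i _ => ?_
    rw [hkey i]
  rw [hrw]
  exact add_le_add_right hmain _
end

section
/- Let N ≥ 1 be an integer, q ∈ ℝ^N with q_i > 0 for all i, and ρ > 0. For λ ≥ 0 define p(λ)_i := q_i^{1/(1+λ)} / Σ_{j=1}^N q_j^{1/(1+λ)} and K(λ) := Σ_{i=1}^N p(λ)_i·log(N·p(λ)_i). If K(0) ≥ ρ, then there exists λ* ≥ 0 with K(λ*) = ρ (equivalently, the binary-search kernel equation f(λ*) = 0 of FedMABA, where f(λ) = K(λ) − ρ, has a nonnegative solution). -/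
/-!
The substitution `t = 1 / (1 + λ)` maps `λ ∈ [0, ∞)` onto `t ∈ (0, 1]` and turns `K(λ)` into the
KL divergence from uniform of the escort distribution `q i ^ t / ∑ j, q j ^ t`. That divergence
is continuous in `t` on all of `ℝ` and vanishes at `t = 0`, where the escort distribution is
uniform; so the intermediate value theorem on `[0, 1]` yields `t` with value `ρ`, necessarily
`t ≠ 0`, and `λ = 1 / t - 1` is the root.
-/

open Real Finset Set

namespace Escort

variable {ι : Type*} [Fintype ι]

noncomputable def escort (q : ι → ℝ) (t : ℝ) (i : ι) : ℝ := q i ^ t / ∑ j, q j ^ t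

noncomputable def escortKL (q : ι → ℝ) (t : ℝ) : ℝ :=
  ∑ i, escort q t i * log (Fintype.card ι * escort q t i)

theorem escort_zero (q : ι → ℝ) (i : ι) : escort q 0 i = (Fintype.card ι : ℝ)⁻¹ := by
  simp [escort]

theorem escortKL_zero (q : ι → ℝ) : escortKL q 0 = 0 := by
  refine Finset.sum_eq_zero fun i _ => ?_
  have : (Fintype.card ι : ℝ) ≠ 0 := Nat.cast_ne_zero.mpr (Fintype.card_pos_iff.mpr ⟨i⟩).ne'
  simp [escort_zero, this]

variable {q : ι → ℝ}

theorem sum_rpow_pos (hq : ∀ i, 0 < q i) (t : ℝ) (i : ι) : 0 < ∑ j, q j ^ t :=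
  Finset.sum_pos (fun j _ => rpow_pos_of_pos (hq j) t) ⟨i, mem_univ i⟩

theorem escort_pos (hq : ∀ i, 0 < q i) (t : ℝ) (i : ι) : 0 < escort q t i :=
  div_pos (rpow_pos_of_pos (hq i) t) (sum_rpow_pos hq t i)

theorem continuous_escort (hq : ∀ i, 0 < q i) (i : ι) : Continuous fun t => escort q t i := by
  have hpow : ∀ j, Continuous fun t : ℝ => q j ^ t := fun j =>
    continuous_const.rpow continuous_id fun _ => Or.inl (hq j).ne'
  exact (hpow i).div (continuous_finsetSum _ fun j _ => hpow j) fun t => (sum_rpow_pos hq t i).ne'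

theorem continuous_escortKL (hq : ∀ i, 0 < q i) : Continuous (escortKL q) := by
  refine continuous_finsetSum _ fun i _ => ?_
  have hcard : (0 : ℝ) < Fintype.card ι := Nat.cast_pos.mpr (Fintype.card_pos_iff.mpr ⟨i⟩)
  exact (continuous_escort hq i).mul <| (continuous_const.mul (continuous_escort hq i)).log
    fun t => (mul_pos hcard (escort_pos hq t i)).ne'

theorem exists_escortKL_eq {ρ : ℝ} (hq : ∀ i, 0 < q i) (hρ : 0 < ρ) (h1 : ρ ≤ escortKL q 1) :
    ∃ t ∈ Ioc (0 : ℝ) 1, escortKL q t = ρ := by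
  obtain ⟨t, ⟨ht0, ht1⟩, hρt⟩ := intermediate_value_Icc zero_le_one
    (continuous_escortKL hq).continuousOn ⟨(escortKL_zero q).symm ▸ hρ.le, h1⟩
  refine ⟨t, ⟨ht0.lt_of_ne ?_, ht1⟩, hρt⟩
  rintro rfl
  exact hρ.ne' (hρt ▸ escortKL_zero q)

end Escort

open Escort

theorem tiltKL_eq_escortKL (N : ℕ) (q : Fin N → ℝ) (lam : ℝ) :
    tiltKL N q lam = escortKL q (1 / (1 + lam)) := by
  simp only [tiltKL, tilt, escortKL, escort, Fintype.card_fin]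

theorem tiltKL_eq_rho_exists_general (N : ℕ) (q : Fin N → ℝ) (hq : ∀ i, 0 < q i)
    (ρ : ℝ) (hρ : 0 < ρ) (h0 : ρ ≤ tiltKL N q 0) :
    ∃ lam : ℝ, 0 ≤ lam ∧ tiltKL N q lam = ρ := by
  rw [tiltKL_eq_escortKL, add_zero, div_one] at h0
  obtain ⟨t, ⟨ht0, ht1⟩, hρt⟩ := exists_escortKL_eq hq hρ h0
  refine ⟨1 / t - 1, sub_nonneg.mpr (one_le_one_div ht0 ht1), ?_⟩
  rw [tiltKL_eq_escortKL, add_sub_cancel, one_div_one_div, hρt]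

/-- **Existence of the FedMABA binary-search root.** For `q i > 0` and `ρ > 0`, if
`K(0) ≥ ρ` then the kernel equation `K(λ*) = ρ` (i.e. `f(λ*) = K(λ*) - ρ = 0`) has a
nonnegative solution `λ* ≥ 0`. -/
theorem tiltKL_eq_rho_exists (N : ℕ) (hN : 1 ≤ N) (q : Fin N → ℝ) (hq : ∀ i, 0 < q i)
    (ρ : ℝ) (hρ : 0 < ρ) (h0 : ρ ≤ tiltKL N q 0) :
    ∃ lam : ℝ, 0 ≤ lam ∧ tiltKL N q lam = ρ :=
  tiltKL_eq_rho_exists_general N q hq ρ hρ h0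
end
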